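/- Let (e_n) be a normalised unconditional Schauder basis of a Banach space X such that any two normalised block sequences (x_n), (y_n) interlacing as x_1 < y_1 < x_2 < y_2 < ... are equivalent. Then every normalised block sequence (x_n) is equivalent to its shift (x_{n+1}). -/

import Mathlib

open Filter Topology

noncomputable section

structure UncSchauderBasis (X : Type*) [NormedAddCommGroup X] [NormedSpace ℝ X] where
  e : ℕ → X
  coord : ℕ → X →L[ℝ] ℝ
  biorth : ∀ n m, coord n (e m) = if n = m then 1 else 0
  expansion : ∀ x : X,
    Filter.Tendsto (fun N => ∑ n ∈ Finset.range N, coord n x • e n) Filter.atTop (nhds x)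
  normalised : ∀ n, ‖e n‖ = 1

section Defs

variable {X Y : Type*} [NormedAddCommGroup X] [NormedSpace ℝ X]
  [NormedAddCommGroup Y] [NormedSpace ℝ Y]

/-- Convergence of the series `∑ x n` (of partial sums). -/
def Converges (x : ℕ → X) : Prop :=
  ∃ s, Filter.Tendsto (fun N => ∑ n ∈ Finset.range N, x n) Filter.atTop (nhds s)

/-- Two sequences are equivalent if the same scalar series converge. -/
def SeqEquiv (x : ℕ → X) (y : ℕ → Y) : Prop :=
  ∀ a : ℕ → ℝ, Converges (fun n => a n • x n) ↔ Converges (fun n => a n • y n)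

/-- `C`-equivalence of two sequences. -/
def CEquiv (C : ℝ) (x : ℕ → X) (y : ℕ → Y) : Prop :=
  ∀ (a : ℕ → ℝ) (N : ℕ),
    C⁻¹ * ‖∑ n ∈ Finset.range N, a n • y n‖ ≤ ‖∑ n ∈ Finset.range N, a n • x n‖ ∧
    ‖∑ n ∈ Finset.range N, a n • x n‖ ≤ C * ‖∑ n ∈ Finset.range N, a n • y n‖

/-- A basic sequence: uniformly bounded partial-sum projections. -/
def IsBasicSeq (x : ℕ → X) : Prop :=
  ∃ K, 1 ≤ K ∧ ∀ (a : ℕ → ℝ) (m n : ℕ), m ≤ n →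
    ‖∑ i ∈ Finset.range m, a i • x i‖ ≤ K * ‖∑ i ∈ Finset.range n, a i • x i‖

/-- A sequence of signs. -/
def IsSigns (θ : ℕ → ℝ) : Prop := ∀ n, θ n = 1 ∨ θ n = -1

end Defs

namespace UncSchauderBasis

variable {X : Type*} [NormedAddCommGroup X] [NormedSpace ℝ X] (b : UncSchauderBasis X)

/-- Support of a vector with respect to the basis. -/
def supp (x : X) : Set ℕ := {n | b.coord n x ≠ 0}

/-- A normalised block sequence of the basis. -/
def IsBlockSeq (x : ℕ → X) : Prop :=
  (∀ n, ‖x n‖ = 1) ∧ (∀ n, (b.supp (x n)).Finite) ∧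
  ∀ n, ∀ i ∈ b.supp (x n), ∀ j ∈ b.supp (x (n+1)), i < j

/-- Unconditionality of the basis. -/
def Unconditional : Prop :=
  ∀ θ : ℕ → ℝ, IsSigns θ → SeqEquiv (fun n => θ n • b.e n) b.e

/-- 1-unconditionality (finite-sum form). -/
def OneUnconditional : Prop :=
  ∀ (θ a : ℕ → ℝ), IsSigns θ → ∀ N,
    ‖∑ n ∈ Finset.range N, (θ n * a n) • b.e n‖ ≤ ‖∑ n ∈ Finset.range N, a n • b.e n‖

/-- The shift property: every normalised block sequence is equivalent to its shift. -/
def ShiftProperty : Prop :=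
  ∀ x : ℕ → X, b.IsBlockSeq x → SeqEquiv x (fun n => x (n+1))

/-- The basis is shrinking. -/
def Shrinking : Prop :=
  ∀ f : X →L[ℝ] ℝ, Filter.Tendsto
    (fun n => sSup ((fun y => |f y|) ''
      {y | y ∈ Submodule.span ℝ (Set.range fun i => b.e (n + i)) ∧ ‖y‖ ≤ 1}))
    Filter.atTop (nhds 0)

/-- The basis is boundedly complete. -/
def BoundedlyComplete : Prop :=
  ∀ a : ℕ → ℝ, (∃ M, ∀ N, ‖∑ i ∈ Finset.range N, a i • b.e i‖ ≤ M) →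
    Converges (fun i => a i • b.e i)

end UncSchauderBasis

/-!
Along a block sequence `x`, the coordinate projection onto the supports of the even blocks is
bounded (unconditionality plus the closed graph theorem), so `∑ aₙ xₙ` converges iff its even part
`∑ a₂ₘ x₂ₘ` and its odd part `∑ a₂ₘ₊₁ x₂ₘ₊₁` both do. The even and odd parts of the shifted series
are `∑ a₂ₘ x₂ₘ₊₁` and `∑ a₂ₘ₊₁ x₂ₘ₊₂`, and the pairs `(x₂ₘ), (x₂ₘ₊₁)` and `(x₂ₘ₊₁), (x₂ₘ₊₂)`
interlace, so the hypothesis matches the parts one by one.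
-/

open Finset

section Series

variable {X : Type*} [NormedAddCommGroup X] [NormedSpace ℝ X]

theorem sum_range_eq_sum_even_add_sum_odd {M : Type*} [AddCommMonoid M] (f : ℕ → M) (N : ℕ) :
    ∑ n ∈ range N, f n =
      ∑ m ∈ range ((N + 1) / 2), f (2 * m) + ∑ m ∈ range (N / 2), f (2 * m + 1) := by
  induction N with
  | zero => simp
  | succ N ih =>
    obtain ⟨k, rfl | rfl⟩ := Nat.even_or_odd' N
    · rw [sum_range_succ, ih, show (2 * k + 1 + 1) / 2 = k + 1 by omega,
        show (2 * k + 1) / 2 = k by omega, show 2 * k / 2 = k by omega, sum_range_succ]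
      abel
    · rw [sum_range_succ, ih, show (2 * k + 1 + 1 + 1) / 2 = k + 1 by omega,
        show (2 * k + 1 + 1) / 2 = k + 1 by omega, show (2 * k + 1) / 2 = k by omega,
        sum_range_succ (fun m => f (2 * m + 1)) k]
      abel

theorem converges_iff_even_odd_of_projection {f : ℕ → X} (P : X →L[ℝ] X)
    (heven : ∀ m, P (f (2 * m)) = f (2 * m)) (hodd : ∀ m, P (f (2 * m + 1)) = 0) :
    Converges f ↔ Converges (fun m => f (2 * m)) ∧ Converges (fun m => f (2 * m + 1)) := by
  have hsplit := sum_range_eq_sum_even_add_sum_odd f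
  constructor
  · rintro ⟨s, hs⟩
    have hs2 : Tendsto (fun k => ∑ n ∈ range (2 * k), f n) atTop (𝓝 s) :=
      hs.comp (tendsto_id.const_mul_atTop' two_pos)
    have hP : ∀ k, P (∑ n ∈ range (2 * k), f n) = ∑ m ∈ range k, f (2 * m) := fun k => by
      simp only [hsplit, show (2 * k + 1) / 2 = k by omega, show 2 * k / 2 = k by omega,
        map_add, map_sum, heven, hodd, sum_const_zero, add_zero]
    have heven_lim := ((P.continuous.tendsto s).comp hs2).congr hP
    refine ⟨⟨_, heven_lim⟩, ⟨_, (hs2.sub heven_lim).congr fun k => ?_⟩⟩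
    simp only [hsplit, show (2 * k + 1) / 2 = k by omega, show 2 * k / 2 = k by omega,
      add_sub_cancel_left]
  · rintro ⟨⟨u, hu⟩, ⟨v, hv⟩⟩
    refine ⟨u + v, ?_⟩
    simp only [hsplit]
    have hdiv := Nat.tendsto_div_const_atTop two_ne_zero
    exact (hu.comp (hdiv.comp (tendsto_add_atTop_nat 1))).add (hv.comp hdiv)

end Series

namespace UncSchauderBasis

variable {X : Type*} [NormedAddCommGroup X] [NormedSpace ℝ X] (b : UncSchauderBasis X)

theorem ext_coord {x y : X} (h : ∀ n, b.coord n x = b.coord n y) : x = y := by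
  have hx := b.expansion x
  simp only [h] at hx
  exact tendsto_nhds_unique hx (b.expansion y)

theorem coord_sum_smul (c : ℕ → ℝ) {m N : ℕ} (hm : m < N) :
    b.coord m (∑ n ∈ range N, c n • b.e n) = c m := by
  simp [b.biorth, hm]

theorem coord_eq_of_tendsto_sum {c : ℕ → ℝ} {s : X}
    (h : Tendsto (fun N => ∑ n ∈ range N, c n • b.e n) atTop (𝓝 s)) (m : ℕ) :
    b.coord m s = c m :=
  tendsto_nhds_unique (((b.coord m).continuous.tendsto s).comp h)
    (tendsto_const_nhds.congr' <| (eventually_gt_atTop m).mono fun _ hN =>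
      (b.coord_sum_smul c hN).symm)

theorem supp_nonempty_of_ne_zero {x : X} (hx : x ≠ 0) : (b.supp x).Nonempty := by
  by_contra h
  refine hx (b.ext_coord fun n => ?_)
  rw [map_zero]
  by_contra hn
  exact h ⟨n, hn⟩

/-- Average the expansion of `x` with its expansion under the signs `+1` on `A`, `-1` off `A`. -/
theorem Unconditional.exists_coord_eq_indicator {b : UncSchauderBasis X} (hu : b.Unconditional)
    (A : Set ℕ) (x : X) : ∃ y, ∀ n, b.coord n y = A.indicator (b.coord · x) n := by
  classical
  let θ : ℕ → ℝ := fun n => if n ∈ A then 1 else -1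
  have hθ : IsSigns θ := fun n => by by_cases hn : n ∈ A <;> simp [θ, hn]
  obtain ⟨t, ht⟩ := (hu θ hθ (b.coord · x)).mpr ⟨x, b.expansion x⟩
  refine ⟨(2⁻¹ : ℝ) • (x + t), b.coord_eq_of_tendsto_sum <|
    (((b.expansion x).add ht).const_smul (2⁻¹ : ℝ)).congr fun N => ?_⟩
  rw [← sum_add_distrib, smul_sum]
  refine sum_congr rfl fun n _ => ?_
  by_cases hn : n ∈ A
  · simp only [θ, hn, if_true, one_smul, Set.indicator_of_mem hn]
    module
  · simp only [θ, hn, if_false, neg_smul, one_smul, smul_neg, add_neg_cancel, smul_zero]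
    rw [Set.indicator_of_notMem hn, zero_smul]

variable (hu : b.Unconditional) (A : Set ℕ)

def restrict (x : X) : X := (hu.exists_coord_eq_indicator A x).choose

theorem coord_restrict (x : X) (n : ℕ) :
    b.coord n (b.restrict hu A x) = A.indicator (b.coord · x) n :=
  (hu.exists_coord_eq_indicator A x).choose_spec n

variable [CompleteSpace X]

def coordProj : X →L[ℝ] X :=
  ContinuousLinearMap.ofSeqClosedGraph
    (g := { toFun := b.restrict hu A
            map_add' := fun x y => b.ext_coord fun n => by
              simp only [coord_restrict, map_add, Set.indicator_add]
            map_smul' := fun c x => b.ext_coord fun n => by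
              simp only [coord_restrict, map_smul, RingHom.id_apply, Set.indicator_smul_apply] })
    fun u x y hux hy => b.ext_coord fun n => by
      refine tendsto_nhds_unique (((b.coord n).continuous.tendsto y).comp hy) ?_
      simp only [Function.comp_def, LinearMap.coe_mk, AddHom.coe_mk, coord_restrict]
      by_cases hn : n ∈ A
      · simp only [Set.indicator_of_mem hn]
        exact ((b.coord n).continuous.tendsto x).comp hux
      · simp only [Set.indicator_of_notMem hn, tendsto_const_nhds]

theorem coord_coordProj (x : X) (n : ℕ) :
    b.coord n (b.coordProj hu A x) = A.indicator (b.coord · x) n :=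
  b.coord_restrict hu A x n

variable {b A}

theorem coordProj_eq_self_of_supp_subset {x : X} (h : b.supp x ⊆ A) : b.coordProj hu A x = x :=
  b.ext_coord fun n => (b.coord_coordProj hu A x n).trans <|
    Set.indicator_apply_eq_self.2 fun hn => not_not.1 fun hx => hn (h hx)

theorem coordProj_eq_zero_of_disjoint {x : X} (h : Disjoint (b.supp x) A) : b.coordProj hu A x = 0 :=
  b.ext_coord fun n => by
    rw [coord_coordProj, map_zero]
    exact Set.indicator_apply_eq_zero.2 fun hn => not_not.1 fun hx => Set.disjoint_left.1 h hx hn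

end UncSchauderBasis

namespace UncSchauderBasis.IsBlockSeq

variable {X : Type*} [NormedAddCommGroup X] [NormedSpace ℝ X] {b : UncSchauderBasis X}
  {z : ℕ → X}

theorem supp_nonempty (hz : b.IsBlockSeq z) (n : ℕ) : (b.supp (z n)).Nonempty :=
  b.supp_nonempty_of_ne_zero fun h => by simpa [h] using hz.1 n

theorem supp_lt (hz : b.IsBlockSeq z) {m m' : ℕ} (h : m < m') :
    ∀ i ∈ b.supp (z m), ∀ j ∈ b.supp (z m'), i < j := by
  induction m', h using Nat.le_induction with
  | base => exact hz.2.2 m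
  | succ m' _ ih =>
    intro i hi j hj
    obtain ⟨k, hk⟩ := hz.supp_nonempty m'
    exact (ih i hi k hk).trans (hz.2.2 m' k hk j hj)

theorem disjoint_supp (hz : b.IsBlockSeq z) {m m' : ℕ} (h : m ≠ m') :
    Disjoint (b.supp (z m)) (b.supp (z m')) := by
  refine Set.disjoint_left.2 fun i hi hi' => ?_
  rcases h.lt_or_gt with h | h
  · exact lt_irrefl i (hz.supp_lt h i hi i hi')
  · exact lt_irrefl i (hz.supp_lt h i hi' i hi)

theorem comp_strictMono (hz : b.IsBlockSeq z) {φ : ℕ → ℕ} (hφ : StrictMono φ) :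
    b.IsBlockSeq (fun n => z (φ n)) :=
  ⟨fun n => hz.1 (φ n), fun n => hz.2.1 (φ n), fun n => hz.supp_lt (hφ n.lt_succ_self)⟩

theorem converges_iff_even_odd [CompleteSpace X] (hu : b.Unconditional) (hz : b.IsBlockSeq z)
    (a : ℕ → ℝ) :
    Converges (fun n => a n • z n) ↔
      Converges (fun m => a (2 * m) • z (2 * m)) ∧
        Converges (fun m => a (2 * m + 1) • z (2 * m + 1)) :=
  converges_iff_even_odd_of_projection (b.coordProj hu (⋃ k, b.supp (z (2 * k))))
    (fun m => by
      rw [map_smul, b.coordProj_eq_self_of_supp_subset hu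
        (Set.subset_iUnion (fun k => b.supp (z (2 * k))) m)])
    (fun m => by
      rw [map_smul, b.coordProj_eq_zero_of_disjoint hu (Set.disjoint_iUnion_right.2 fun k =>
        hz.disjoint_supp (by omega)), smul_zero])

end UncSchauderBasis.IsBlockSeq

theorem interlaced_equivalent_imp_shift_property
    {X : Type*} [NormedAddCommGroup X] [NormedSpace ℝ X] [CompleteSpace X]
    (b : UncSchauderBasis X) (hu : b.Unconditional)
    (hinter : ∀ x y : ℕ → X, b.IsBlockSeq x → b.IsBlockSeq y →
      (∀ n, (∀ i ∈ b.supp (x n), ∀ j ∈ b.supp (y n), i < j) ∧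
            (∀ j ∈ b.supp (y n), ∀ i ∈ b.supp (x (n+1)), j < i)) →
      SeqEquiv x y) :
    ∀ x : ℕ → X, b.IsBlockSeq x → SeqEquiv x (fun n => x (n+1)) := by
  intro x hx
  have interlaced {φ ψ : ℕ → ℕ} (hφ : StrictMono φ) (hψ : StrictMono ψ)
      (h : ∀ n, φ n < ψ n ∧ ψ n < φ (n + 1)) :
      SeqEquiv (fun n => x (φ n)) (fun n => x (ψ n)) :=
    hinter _ _ (hx.comp_strictMono hφ) (hx.comp_strictMono hψ) fun n =>
      ⟨hx.supp_lt (h n).1, hx.supp_lt (h n).2⟩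
  have hmono (c : ℕ) : StrictMono fun n => 2 * n + c := fun _ _ h => by dsimp only; omega
  have hshift : b.IsBlockSeq (fun n => x (n + 1)) :=
    hx.comp_strictMono fun _ _ h => Nat.add_lt_add_right h 1
  intro a
  exact (hx.converges_iff_even_odd hu a).trans <|
    (and_congr (interlaced (hmono 0) (hmono 1) (fun n => by omega) (a <| 2 * ·))
      (interlaced (hmono 1) (hmono 2) (fun n => by omega) (a <| 2 * · + 1))).trans
    (hshift.converges_iff_even_odd hu a).symm
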